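/- Let G be a finite simple graph and let π = (W_1, …, W_t) be a clique vertex-partition of G. Then the h-vector of the independence complex Ind(G^π) (which is pure of dimension t − 1) equals the face vector of Ind(G): for every j with 0 ≤ j ≤ t, the number of independent sets of cardinality j in the clique-whiskered graph G^π equals Σ_{i=0}^{j} C(t−i, j−i) · f_{i−1}(G), where f_{i−1}(G) is the number of independent sets of cardinality i in G. -/

import Mathlib

/-- A finset of vertices is an independent set of the graph `G`. -/
def IsIndep {V : Type*} (G : SimpleGraph V) (s : Finset V) : Prop :=
  ∀ u ∈ s, ∀ v ∈ s, ¬ G.Adj u v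

/-- The number of independent sets of cardinality `k` in `G`
(the face number `f_{k-1}` of the independence complex of `G`). -/
noncomputable def indepCount {V : Type*} (G : SimpleGraph V) (k : ℕ) : ℕ :=
  Set.ncard {s : Finset V | IsIndep G s ∧ s.card = k}

/-- A clique vertex-partition of `G`: a family of `t` pairwise disjoint (possibly empty)
cliques of `G` whose union is the whole vertex set. -/
structure CliquePartition {V : Type*} (G : SimpleGraph V) (t : ℕ) where
  part : Fin t → Finset V
  disj : ∀ i j, i ≠ j → Disjoint (part i) (part j)
  cover : ∀ v, ∃ i, v ∈ part i
  clique : ∀ i, G.IsClique (part i : Set V)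

/-- The clique-whiskered graph `G^π`: to each clique `W_i` of the partition a new vertex
`w_i` (encoded as `Sum.inr i`) is attached, joined to every vertex of `W_i`. -/
def whisker {V : Type*} {t : ℕ} (G : SimpleGraph V) (π : CliquePartition G t) :
    SimpleGraph (V ⊕ Fin t) :=
  SimpleGraph.fromRel fun a b =>
    match a, b with
    | Sum.inl u, Sum.inl v => G.Adj u v
    | Sum.inl v, Sum.inr i => v ∈ π.part i
    | _, _ => False

/-!
An independent set of `G^π` splits as `S ⊔ R` with `S` independent in `G` and `R` a set of
whisker vertices avoiding the cliques that `S` meets. Each clique meets an independent set at most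
once, so `S` meets exactly `#S` of the `t` cliques, and for fixed `S` with `#S = i` there are
`C(t - i, j - i)` choices of `R` completing it to an independent set of size `j`.
-/

open Finset

instance IsIndep.decidablePred {V : Type*} (G : SimpleGraph V) [DecidableRel G.Adj] :
    DecidablePred (IsIndep G) :=
  fun s => by unfold IsIndep; infer_instance

lemma indepCount_eq_card_filter {V : Type*} [Fintype V] (G : SimpleGraph V) [DecidableRel G.Adj]
    (k : ℕ) : indepCount G k = #{s : Finset V | IsIndep G s ∧ #s = k} := by
  rw [indepCount, ← Set.ncard_coe_finset]
  congr 1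
  ext s
  simp

lemma sum_card_le_eq_sum_range {α M : Type*} [Fintype α] [AddCommMonoid M]
    (p : Finset α → Prop) [DecidablePred p] (f : ℕ → M) (j : ℕ) :
    ∑ s ∈ {s : Finset α | p s ∧ #s ≤ j}, f #s =
      ∑ i ∈ range (j + 1), #{s : Finset α | p s ∧ #s = i} • f i := by
  rw [← sum_fiberwise_of_maps_to (g := card) (t := range (j + 1))
    fun s hs => mem_range_succ_iff.2 (mem_filter.1 hs).2.2]
  refine sum_congr rfl fun i hi => ?_
  rw [← sum_const, filter_filter]
  refine sum_congr (filter_congr fun s _ => ?_) fun s hs => by rw [(mem_filter.1 hs).2.2]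
  have hij := mem_range_succ_iff.1 hi
  exact ⟨fun h => ⟨h.1.1, h.2⟩, fun h => ⟨⟨h.1, by omega⟩, h.2⟩⟩

namespace CliquePartition

variable {V : Type*} {G : SimpleGraph V} {t : ℕ} (π : CliquePartition G t)

noncomputable def index (v : V) : Fin t := (π.cover v).choose

lemma mem_part_index (v : V) : v ∈ π.part (π.index v) := (π.cover v).choose_spec

lemma mem_part_iff_index_eq {v : V} {i : Fin t} : v ∈ π.part i ↔ π.index v = i := by
  refine ⟨fun hv => ?_, fun h => h ▸ π.mem_part_index v⟩
  by_contra hne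
  exact disjoint_left.1 (π.disj _ _ hne) (π.mem_part_index v) hv

lemma injOn_index {s : Finset V} (hs : IsIndep G s) : Set.InjOn π.index s := by
  intro u hu v hv huv
  by_contra hne
  exact hs u hu v hv <|
    π.clique _ (π.mem_part_index u) (huv ▸ π.mem_part_index v) hne

lemma card_image_index {s : Finset V} (hs : IsIndep G s) : #(s.image π.index) = #s :=
  card_image_of_injOn (π.injOn_index hs)

end CliquePartition

section whisker

variable {V : Type*} {G : SimpleGraph V} {t : ℕ} (π : CliquePartition G t)

@[simp]
lemma whisker_adj_inl_inl {u v : V} : (whisker G π).Adj (.inl u) (.inl v) ↔ G.Adj u v := by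
  simp only [whisker, SimpleGraph.fromRel_adj, ne_eq, Sum.inl.injEq]
  exact ⟨fun ⟨_, h⟩ => h.elim id .symm, fun h => ⟨h.ne, .inl h⟩⟩

@[simp]
lemma whisker_adj_inl_inr {v : V} {i : Fin t} :
    (whisker G π).Adj (.inl v) (.inr i) ↔ π.index v = i := by
  simp [whisker, π.mem_part_iff_index_eq]

@[simp]
lemma whisker_adj_inr_inl {v : V} {i : Fin t} :
    (whisker G π).Adj (.inr i) (.inl v) ↔ π.index v = i := by
  rw [SimpleGraph.adj_comm, whisker_adj_inl_inr]

@[simp]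
lemma whisker_not_adj_inr_inr {i i' : Fin t} : ¬ (whisker G π).Adj (.inr i) (.inr i') := by
  simp [whisker]

lemma isIndep_whisker_iff {T : Finset (V ⊕ Fin t)} :
    IsIndep (whisker G π) T ↔
      IsIndep G T.toLeft ∧ Disjoint T.toRight (T.toLeft.image π.index) := by
  simp only [IsIndep, disjoint_left, mem_image, mem_toLeft, mem_toRight, not_exists, not_and]
  constructor
  · intro h
    exact ⟨fun u hu v hv => by simpa using h _ hu _ hv,
      fun i hi v hv hvi => by simpa [hvi] using h _ hv _ hi⟩
  · rintro ⟨hS, hR⟩ (u | i) hu (v | i') hv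
    · simpa using hS u hu v hv
    · simpa using hR hv u hu
    · simpa using hR hu v hv
    · simp

variable [Fintype V] [DecidableEq V] [DecidablePred (IsIndep (whisker G π))]

lemma card_isIndep_whisker_toLeft_eq {S : Finset V} (hS : IsIndep G S) {j : ℕ} (hSj : #S ≤ j) :
    #{T : Finset (V ⊕ Fin t) | (IsIndep (whisker G π) T ∧ #T = j) ∧ T.toLeft = S} =
      (t - #S).choose (j - #S) := by
  have hcompl : #(S.image π.index)ᶜ = t - #S := by
    rw [card_compl, Fintype.card_fin, π.card_image_index hS]
  rw [← hcompl, ← card_powersetCard]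
  refine card_nbij' toRight S.disjSum ?_ ?_ ?_ ?_
  · intro T hT
    simp only [coe_filter, mem_univ, true_and, Set.mem_ofPred_eq, isIndep_whisker_iff] at hT
    obtain ⟨⟨⟨-, hdisj⟩, rfl⟩, rfl⟩ := hT
    rw [mem_coe, mem_powersetCard, subset_compl_iff_disjoint_right]
    exact ⟨hdisj, by rw [← card_toLeft_add_card_toRight (u := T)]; omega⟩
  · intro R hR
    rw [mem_coe, mem_powersetCard, subset_compl_iff_disjoint_right] at hR
    simp only [coe_filter, mem_univ, true_and, Set.mem_ofPred_eq, isIndep_whisker_iff,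
      toLeft_disjSum, toRight_disjSum, card_disjSum]
    exact ⟨⟨⟨hS, hR.1⟩, by omega⟩, trivial⟩
  · intro T hT
    simp only [coe_filter, mem_univ, true_and, Set.mem_ofPred_eq] at hT
    rw [← hT.2, toLeft_disjSum_toRight]
  · intro R _
    exact toRight_disjSum

end whisker

theorem whisker_h_eq_f_general {V : Type*} [Fintype V] (G : SimpleGraph V) {t : ℕ}
    (π : CliquePartition G t) (j : ℕ) :
    indepCount (whisker G π) j =
      ∑ i ∈ Finset.range (j + 1), (t - i).choose (j - i) * indepCount G i := by
  classical
  rw [indepCount_eq_card_filter]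
  -- The bound `#S ≤ j` keeps the empty fibres out: for `#S > j` the truncated `j - #S` is `0`.
  calc #{T | IsIndep (whisker G π) T ∧ #T = j}
      = ∑ S ∈ {S : Finset V | IsIndep G S ∧ #S ≤ j},
          #{T ∈ {T | IsIndep (whisker G π) T ∧ #T = j} | T.toLeft = S} :=
        card_eq_sum_card_fiberwise fun T hT => by
          simp only [coe_filter, mem_univ, true_and, Set.mem_ofPred_eq, isIndep_whisker_iff] at hT ⊢
          exact ⟨hT.1.1, hT.2 ▸ card_toLeft_le⟩
    _ = ∑ S ∈ {S : Finset V | IsIndep G S ∧ #S ≤ j}, (t - #S).choose (j - #S) :=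
        sum_congr rfl fun S hS => by
          rw [mem_filter] at hS
          rw [filter_filter, card_isIndep_whisker_toLeft_eq π hS.2.1 hS.2.2]
    _ = ∑ i ∈ range (j + 1), (t - i).choose (j - i) * indepCount G i := by
        rw [sum_card_le_eq_sum_range _ fun i => (t - i).choose (j - i)]
        simp only [indepCount_eq_card_filter, smul_eq_mul, mul_comm]

/-- The `h`-vector of the independence complex of the clique-whiskered graph `G^π`
(pure of dimension `t - 1`) is the face vector of the independence complex of `G`:
for `0 ≤ j ≤ t` the number of independent sets of cardinality `j` in `G^π` equals
`∑_{i=0}^{j} C(t-i, j-i) · f_{i-1}(G)`. -/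
theorem whisker_h_eq_f {V : Type*} [Fintype V] (G : SimpleGraph V) {t : ℕ}
    (π : CliquePartition G t) (j : ℕ) (hj : j ≤ t) :
    indepCount (whisker G π) j =
      ∑ i ∈ Finset.range (j + 1), (t - i).choose (j - i) * indepCount G i :=
  whisker_h_eq_f_general G π j
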